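/- arXiv:math/0104036 — 2 statements merged into one kernel-verified Lean document; each statement's English description precedes it below -/
import Mathlib

section
/- Let m ≥ 1. For every j ∈ {2, …, m} and every ζ ∈ 𝔽₂^m one has c(τ^P_j(ζ)) = c(ζ) and (τ^P_j(ζ))_1 = ζ_1; consequently both the first coordinate ζ_1 and the block count c(ζ) are constant on each Γ_P-orbit. -/
open scoped Classical

noncomputable section

/-- The `i`-th coordinate (1-indexed) of `ζ ∈ 𝔽₂^m`, interpreted as `0` for `i` out of range. -/
def padP {m : ℕ} (ζ : Fin m → ZMod 2) (i : ℕ) : ZMod 2 :=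
  if h : 1 ≤ i ∧ i ≤ m then ζ ⟨i - 1, by omega⟩ else 0

/-- The transvection `τ^P_j(ζ) = ζ + (ζ_{j-1} + ζ_{j+1}) e_j`. -/
def tauP (m j : ℕ) (ζ : Fin m → ZMod 2) : Fin m → ZMod 2 :=
  fun k => if (k : ℕ) + 1 = j then ζ k + (padP ζ (j - 1) + padP ζ (j + 1)) else ζ k

/-- The group `Γ_P`, generated by the transvections `τ^P_j`, `2 ≤ j ≤ m`. -/
def GammaP (m : ℕ) : Subgroup (Equiv.Perm (Fin m → ZMod 2)) :=
  Subgroup.closure {g | ∃ j, 2 ≤ j ∧ j ≤ m ∧ ⇑g = tauP m j}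

/-- The number of maximal blocks of consecutive 1's in `(ζ_1, …, ζ_m)`:
we count the positions where a block starts. -/
def blockCount {m : ℕ} (ζ : Fin m → ZMod 2) : ℕ :=
  ((Finset.Icc 1 m).filter (fun i => padP ζ i = 1 ∧ padP ζ (i - 1) = 0)).card

/-!
`τ^P_j` changes at most the coordinate `ζ_j`, and only when `ζ_{j-1} ≠ ζ_{j+1}`. Then `ζ_j` sits
at the boundary between a block and a gap, and flipping it moves that boundary by one place:
a block is lengthened or shortened, but no block is created, destroyed or merged. Counting
block starts, only the positions `j` and `j + 1` are affected, and a four-case check shows that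
their total is unchanged. Since `j ≥ 2`, the first coordinate is never touched.
-/

def blockStartIndicator (prev cur : ZMod 2) : ℕ :=
  if cur = 1 ∧ prev = 0 then 1 else 0

lemma blockStartIndicator_add_of_flip (a x b : ZMod 2) :
    blockStartIndicator a (x + (a + b)) + blockStartIndicator (x + (a + b)) b =
      blockStartIndicator a x + blockStartIndicator x b := by
  revert a x b
  decide

lemma padP_eq_zero_of_lt {m : ℕ} (ζ : Fin m → ZMod 2) {i : ℕ} (hi : m < i) : padP ζ i = 0 :=
  dif_neg (by omega)

/-- The range extends to `m + 1`, where `padP` vanishes, so that the positions `j` and `j + 1`,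
whose block-start status `τ^P_j` can change, lie inside it even for `j = m`. -/
lemma blockCount_eq_sum {m : ℕ} (ζ : Fin m → ZMod 2) :
    blockCount ζ = ∑ i ∈ Finset.Icc 1 (m + 1), blockStartIndicator (padP ζ (i - 1)) (padP ζ i) := by
  rw [blockCount, Finset.card_filter, ← Finset.insert_Icc_right_eq_Icc_add_one (by omega),
    Finset.sum_insert (by simp)]
  simp [blockStartIndicator, padP_eq_zero_of_lt ζ m.lt_add_one]

lemma padP_tauP_of_ne {m j i : ℕ} (ζ : Fin m → ZMod 2) (hi : i ≠ j) :
    padP (tauP m j ζ) i = padP ζ i := by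
  unfold padP tauP
  split
  · exact if_neg (show i - 1 + 1 ≠ j by omega)
  · rfl

lemma padP_tauP_self {m j : ℕ} (hj : 1 ≤ j) (hjm : j ≤ m) (ζ : Fin m → ZMod 2) :
    padP (tauP m j ζ) j = padP ζ j + (padP ζ (j - 1) + padP ζ (j + 1)) := by
  have hk : ((⟨j - 1, by omega⟩ : Fin m) : ℕ) + 1 = j := Nat.sub_add_cancel hj
  unfold padP tauP
  rw [dif_pos ⟨hj, hjm⟩, dif_pos ⟨hj, hjm⟩, if_pos hk]
  rfl

lemma blockCount_tauP {m j : ℕ} (hj : 1 ≤ j) (hjm : j ≤ m) (ζ : Fin m → ZMod 2) :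
    blockCount (tauP m j ζ) = blockCount ζ := by
  have hsub : ({j, j + 1} : Finset ℕ) ⊆ Finset.Icc 1 (m + 1) := by
    intro x hx
    simp only [Finset.mem_insert, Finset.mem_singleton] at hx
    simp only [Finset.mem_Icc]
    omega
  rw [blockCount_eq_sum, blockCount_eq_sum, ← Finset.sum_sdiff hsub, ← Finset.sum_sdiff hsub]
  congr 1
  · refine Finset.sum_congr rfl fun i hi => ?_
    simp only [Finset.mem_sdiff, Finset.mem_insert, Finset.mem_singleton, not_or] at hi
    rw [padP_tauP_of_ne ζ hi.2.1, padP_tauP_of_ne ζ (show i - 1 ≠ j by omega)]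
  · rw [Finset.sum_pair (by omega), Finset.sum_pair (by omega), Nat.add_sub_cancel,
      padP_tauP_self hj hjm, padP_tauP_of_ne ζ (show j - 1 ≠ j by omega),
      padP_tauP_of_ne ζ (show j + 1 ≠ j by omega)]
    exact blockStartIndicator_add_of_flip _ _ _

lemma padP_tauP_one {m j : ℕ} (hj : 2 ≤ j) (ζ : Fin m → ZMod 2) :
    padP (tauP m j ζ) 1 = padP ζ 1 :=
  padP_tauP_of_ne ζ (by omega)

lemma Equiv.Perm.apply_eq_of_mem_closure {α β : Type*} {S : Set (Equiv.Perm α)} {f : α → β}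
    (hS : ∀ g ∈ S, ∀ x, f (g x) = f x) {g : Equiv.Perm α} (hg : g ∈ Subgroup.closure S) (x : α) :
    f (g x) = f x := by
  induction hg using Subgroup.closure_induction generalizing x with
  | mem g hg => exact hS g hg x
  | one => rfl
  | mul g h _ _ ihg ihh => exact (ihg (h x)).trans (ihh x)
  | inv g _ ihg => simpa using (ihg (g⁻¹ x)).symm

theorem blockCount_and_first_coord_invariant_general (m : ℕ) :
    (∀ j, 2 ≤ j → j ≤ m → ∀ ζ : Fin m → ZMod 2,
      blockCount (tauP m j ζ) = blockCount ζ ∧ padP (tauP m j ζ) 1 = padP ζ 1) ∧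
    (∀ g ∈ GammaP m, ∀ ζ : Fin m → ZMod 2,
      blockCount (g ζ) = blockCount ζ ∧ padP (g ζ) 1 = padP ζ 1) := by
  have hgen : ∀ j, 2 ≤ j → j ≤ m → ∀ ζ : Fin m → ZMod 2,
      blockCount (tauP m j ζ) = blockCount ζ ∧ padP (tauP m j ζ) 1 = padP ζ 1 :=
    fun j hj hjm ζ => ⟨blockCount_tauP (by omega) hjm ζ, padP_tauP_one hj ζ⟩
  refine ⟨hgen, fun g hg ζ => Prod.ext_iff.mp <|
    Equiv.Perm.apply_eq_of_mem_closure (f := fun ζ => (blockCount ζ, padP ζ 1)) ?_ hg ζ⟩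
  rintro _ ⟨j, hj, hjm, hgj⟩ ζ
  rw [hgj]
  exact Prod.ext_iff.mpr (hgen j hj hjm ζ)

/-- For every `j ∈ {2, …, m}` and every `ζ`, `c(τ^P_j ζ) = c(ζ)` and `(τ^P_j ζ)_1 = ζ_1`;
consequently `ζ_1` and `c(ζ)` are constant on each `Γ_P`-orbit. -/
theorem blockCount_and_first_coord_invariant (m : ℕ) (hm : 1 ≤ m) :
    (∀ j, 2 ≤ j → j ≤ m → ∀ ζ : Fin m → ZMod 2,
      blockCount (tauP m j ζ) = blockCount ζ ∧ padP (tauP m j ζ) 1 = padP ζ 1) ∧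
    (∀ g ∈ GammaP m, ∀ ζ : Fin m → ZMod 2,
      blockCount (g ζ) = blockCount ζ ∧ padP (g ζ) 1 = padP ζ 1) :=
  blockCount_and_first_coord_invariant_general m
end
end

section
/- Let m ≥ 1. For every pair (α, β) ∈ 𝔽₂ × 𝔽₂ there is exactly one fixed point ζ of the Γ_S-action on 𝔽₂^{2m} with ζ_{2m−1} = α and ζ_{2m} = β; in particular, the Γ_S-action has exactly four fixed points. -/
open scoped Classical

noncomputable section

/-- The `i`-th coordinate (1-indexed) of `ζ ∈ 𝔽₂^{2m}`, interpreted as `0` out of range. -/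
def padS {m : ℕ} (ζ : Fin (2 * m) → ZMod 2) (i : ℕ) : ZMod 2 :=
  if h : 1 ≤ i ∧ i ≤ 2 * m then ζ ⟨i - 1, by omega⟩ else 0

/-- The transvection `τ^S_j(ζ) = ζ + (ζ_{j-2} + ζ_{j-1} + ζ_{j+1} + ζ_{j+2}) e_j`. -/
def tauS (m j : ℕ) (ζ : Fin (2 * m) → ZMod 2) : Fin (2 * m) → ZMod 2 :=
  fun k => if (k : ℕ) + 1 = j then
    ζ k + (padS ζ (j - 2) + padS ζ (j - 1) + padS ζ (j + 1) + padS ζ (j + 2))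
  else ζ k

/-- The group `Γ_S`, generated by the transvections `τ^S_j`, `3 ≤ j ≤ 2m`. -/
def GammaS (m : ℕ) : Subgroup (Equiv.Perm (Fin (2 * m) → ZMod 2)) :=
  Subgroup.closure {g | ∃ j, 3 ≤ j ∧ j ≤ 2 * m ∧ ⇑g = tauS m j}

/-! ### Auxiliary definitions for the fixed points -/

def gS (d : ℕ) : ZMod 2 := if d % 6 = 1 ∨ d % 6 = 2 ∨ d % 6 = 3 then 1 else 0

def hS (d : ℕ) : ZMod 2 := if d % 3 = 0 then 1 else 0

/-- The explicit fixed point with `ζ_{2m-1} = α`, `ζ_{2m} = β`. -/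
def solS (m : ℕ) (α β : ZMod 2) : Fin (2 * m) → ZMod 2 :=
  fun k => α * gS (2 * m - 1 - (k : ℕ)) + β * hS (2 * m - 1 - (k : ℕ))

lemma gS_rec (e : ℕ) : gS e + gS (e + 1) + gS (e + 3) + gS (e + 4) = 0 := by
  unfold gS
  split_ifs <;> first | decide | omega

lemma hS_rec (e : ℕ) : hS e + hS (e + 1) + hS (e + 3) + hS (e + 4) = 0 := by
  unfold hS
  split_ifs <;> first | decide | omega

lemma padS_out {m : ℕ} (ζ : Fin (2 * m) → ZMod 2) {i : ℕ} (h : ¬(1 ≤ i ∧ i ≤ 2 * m)) :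
    padS ζ i = 0 := by
  unfold padS; rw [dif_neg h]

lemma padS_solS {m : ℕ} (α β : ZMod 2) {i : ℕ} (h1 : 1 ≤ i) (h2 : i ≤ 2 * m) :
    padS (solS m α β) i = α * gS (2 * m - i) + β * hS (2 * m - i) := by
  unfold padS
  rw [dif_pos ⟨h1, h2⟩]
  show α * gS (2 * m - 1 - (i - 1)) + β * hS (2 * m - 1 - (i - 1)) = _
  rw [show 2 * m - 1 - (i - 1) = 2 * m - i by omega]

lemma tauS_fixed_of (m j : ℕ) {ζ : Fin (2 * m) → ZMod 2}
    (h : padS ζ (j - 2) + padS ζ (j - 1) + padS ζ (j + 1) + padS ζ (j + 2) = 0) :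
    tauS m j ζ = ζ := by
  funext k
  unfold tauS
  split
  · rw [h, add_zero]
  · rfl

lemma fixed_rec {m i : ℕ} (hi : 1 ≤ i) (him : i + 2 ≤ 2 * m) {ζ : Fin (2 * m) → ZMod 2}
    (hζ : tauS m (i + 2) ζ = ζ) :
    padS ζ i + padS ζ (i + 1) + padS ζ (i + 3) + padS ζ (i + 4) = 0 := by
  have hk : i + 1 < 2 * m := by omega
  have h := congrFun hζ ⟨i + 1, hk⟩
  unfold tauS at h
  rw [if_pos rfl] at h
  rw [show i + 2 - 2 = i by omega, show i + 2 - 1 = i + 1 by omega,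
    show i + 2 + 1 = i + 3 by omega, show i + 2 + 2 = i + 4 by omega] at h
  exact add_eq_left.mp h

/-- The explicit solution is a fixed point. -/
lemma solS_fixed (m : ℕ) (α β : ZMod 2) :
    ∀ j, 3 ≤ j → j ≤ 2 * m → tauS m j (solS m α β) = solS m α β := by
  intro j hj3 hjm
  apply tauS_fixed_of
  rcases Nat.lt_or_ge j (2 * m - 1) with hc | hc
  · -- j + 2 ≤ 2 * m
    have hj2 : j + 2 ≤ 2 * m := by omega
    set e := 2 * m - (j + 2) with he
    rw [padS_solS α β (by omega) (by omega : j - 2 ≤ 2 * m),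
      padS_solS α β (by omega) (by omega : j - 1 ≤ 2 * m),
      padS_solS α β (by omega) (by omega : j + 1 ≤ 2 * m),
      padS_solS α β (by omega) (by omega : j + 2 ≤ 2 * m)]
    rw [show 2 * m - (j - 2) = e + 4 by omega, show 2 * m - (j - 1) = e + 3 by omega,
      show 2 * m - (j + 1) = e + 1 by omega, show 2 * m - (j + 2) = e by omega]
    linear_combination α * gS_rec e + β * hS_rec e
  · rcases Nat.lt_or_ge j (2 * m) with hc2 | hc2
    · -- j = 2 * m - 1
      have hj : j = 2 * m - 1 := by omega
      rw [padS_solS α β (by omega) (by omega : j - 2 ≤ 2 * m),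
        padS_solS α β (by omega) (by omega : j - 1 ≤ 2 * m),
        padS_solS α β (by omega) (by omega : j + 1 ≤ 2 * m),
        padS_out _ (by omega)]
      rw [show 2 * m - (j - 2) = 3 by omega, show 2 * m - (j - 1) = 2 by omega,
        show 2 * m - (j + 1) = 0 by omega]
      have hg : (2 : ZMod 2) = 0 := rfl
      rw [show gS 3 = 1 from rfl, show gS 2 = 1 from rfl, show gS 0 = 0 from rfl,
        show hS 3 = 1 from rfl, show hS 2 = 0 from rfl, show hS 0 = 1 from rfl]
      linear_combination α * hg + β * hg
    · -- j = 2 * m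
      have hj : j = 2 * m := by omega
      rw [padS_solS α β (by omega) (by omega : j - 2 ≤ 2 * m),
        padS_solS α β (by omega) (by omega : j - 1 ≤ 2 * m),
        padS_out _ (by omega), padS_out _ (by omega)]
      rw [show 2 * m - (j - 2) = 2 by omega, show 2 * m - (j - 1) = 1 by omega]
      have hg : (2 : ZMod 2) = 0 := rfl
      rw [show gS 2 = 1 from rfl, show gS 1 = 1 from rfl,
        show hS 2 = 0 from rfl, show hS 1 = 0 from rfl]
      linear_combination α * hg

lemma solS_pad_last {m : ℕ} (hm : 1 ≤ m) (α β : ZMod 2) :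
    padS (solS m α β) (2 * m - 1) = α ∧ padS (solS m α β) (2 * m) = β := by
  constructor
  · rw [padS_solS α β (by omega) (by omega), show 2 * m - (2 * m - 1) = 1 by omega]
    rw [show gS 1 = 1 from rfl, show hS 1 = 0 from rfl]
    ring
  · rw [padS_solS α β (by omega) (by omega), show 2 * m - 2 * m = 0 by omega]
    rw [show gS 0 = 0 from rfl, show hS 0 = 1 from rfl]
    ring

/-- Uniqueness: two fixed points agreeing in the last two coordinates agree. -/
lemma fixed_ext {m : ℕ} {ζ η : Fin (2 * m) → ZMod 2}
    (hζ : ∀ j, 3 ≤ j → j ≤ 2 * m → tauS m j ζ = ζ)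
    (hη : ∀ j, 3 ≤ j → j ≤ 2 * m → tauS m j η = η)
    (h1 : padS ζ (2 * m - 1) = padS η (2 * m - 1))
    (h2 : padS ζ (2 * m) = padS η (2 * m)) : ζ = η := by
  have key : ∀ n i, 2 * m ≤ i + n → padS ζ i = padS η i := by
    intro n
    induction n with
    | zero =>
      intro i hi
      rcases eq_or_lt_of_le (by omega : 2 * m ≤ i) with h | h
      · rw [← h]; exact h2
      · rw [padS_out _ (by omega), padS_out _ (by omega)]
    | succ n ih =>
      intro i hi
      by_cases hle : 2 * m ≤ i + n
      · exact ih i hle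
      · have hin : i + n + 1 = 2 * m := by omega
        by_cases hn : n = 0
        · rw [show i = 2 * m - 1 by omega]; exact h1
        · by_cases hi0 : i = 0
          · subst hi0
            rw [padS_out _ (by omega), padS_out _ (by omega)]
          · have hi1 : 1 ≤ i := by omega
            have hi2 : i + 2 ≤ 2 * m := by omega
            have eζ := fixed_rec hi1 hi2 (hζ (i + 2) (by omega) hi2)
            have eη := fixed_rec hi1 hi2 (hη (i + 2) (by omega) hi2)
            have b1 : padS ζ (i + 1) = padS η (i + 1) := ih _ (by omega)
            have b3 : padS ζ (i + 3) = padS η (i + 3) := ih _ (by omega)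
            have b4 : padS ζ (i + 4) = padS η (i + 4) := ih _ (by omega)
            rw [← b1, ← b3, ← b4] at eη
            linear_combination eζ - eη
  funext k
  have h := key (2 * m) ((k : ℕ) + 1) (by omega)
  have hk : 1 ≤ (k : ℕ) + 1 ∧ (k : ℕ) + 1 ≤ 2 * m := ⟨by omega, by omega⟩
  unfold padS at h
  rw [dif_pos hk, dif_pos hk] at h
  simpa using h

/-- For every `(α, β) ∈ 𝔽₂ × 𝔽₂` there is exactly one fixed point `ζ` of the `Γ_S`-action
on `𝔽₂^{2m}` with `ζ_{2m−1} = α` and `ζ_{2m} = β`; in particular, the action has exactly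
four fixed points. -/
theorem GammaS_fixed_points (m : ℕ) (hm : 1 ≤ m) :
    (∀ α β : ZMod 2, ∃! ζ : Fin (2 * m) → ZMod 2,
      (∀ j, 3 ≤ j → j ≤ 2 * m → tauS m j ζ = ζ) ∧ padS ζ (2 * m - 1) = α ∧ padS ζ (2 * m) = β) ∧
    Nat.card {ζ : Fin (2 * m) → ZMod 2 | ∀ j, 3 ≤ j → j ≤ 2 * m → tauS m j ζ = ζ} = 4 := by
  constructor
  · intro α β
    refine ⟨solS m α β, ⟨solS_fixed m α β, solS_pad_last hm α β⟩, ?_⟩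
    rintro ζ ⟨hfix, hα, hβ⟩
    exact fixed_ext hfix (solS_fixed m α β)
      (by rw [hα, (solS_pad_last hm α β).1]) (by rw [hβ, (solS_pad_last hm α β).2])
  · have e : {ζ : Fin (2 * m) → ZMod 2 | ∀ j, 3 ≤ j → j ≤ 2 * m → tauS m j ζ = ζ} ≃
        ZMod 2 × ZMod 2 :=
      { toFun := fun ζ => (padS ζ.1 (2 * m - 1), padS ζ.1 (2 * m))
        invFun := fun p => ⟨solS m p.1 p.2, solS_fixed m p.1 p.2⟩
        left_inv := by
          rintro ⟨ζ, hζ⟩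
          ext : 1
          exact (fixed_ext hζ (solS_fixed m _ _)
            (by rw [(solS_pad_last hm _ _).1]) (by rw [(solS_pad_last hm _ _).2])).symm
        right_inv := by
          rintro ⟨α, β⟩
          simp [(solS_pad_last hm α β).1, (solS_pad_last hm α β).2] }
    rw [Nat.card_congr e]
    simp [Nat.card_eq_fintype_card]
end
end
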